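/- arXiv:2009.02484 — 4 statements merged into one kernel-verified Lean document; each statement's English description precedes it below -/
import Mathlib

section
/- For all t ∈ [0,T] it holds that sup_{x ∈ O} (|u(t,x)|/V(t,x)) ≤ [sup_{x ∈ O} (|g(x)|/V(T,x)) + sup_{x ∈ O} sup_{s ∈ [t,T]} (|T f(s,x,0)|/V(s,x))] · e^{L(T−t)}. -/
/-! Let `w s := sup_x |u(s,x)| / V(s,x)`. The fixed-point equation, the Lipschitz bound on `f` and
the Lyapunov inequality `E[V(s, X^x_{t,s})] ≤ V(t,x)` show that `w ≤ ψ` on `[t,T]` implies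
`w s ≤ a + L ∫_s^T ψ`, where `a` is the sum of the two suprema on the right-hand side. Starting
from the a-priori bound `w ≤ C` and iterating, `w s` is bounded by the Picard iterates
`a ∑_{k<n} (L(T-s))^k/k! + C (L(T-s))^n/n!`, which converge to `a e^{L(T-s)}`. The iteration
replaces Gronwall's lemma, which would need `w` to be measurable. -/

open MeasureTheory ENNReal

noncomputable section

/-- `ℝ^d` realized as functions `Fin d → ℝ`. -/
abbrev Vec (d : ℕ) := Fin d → ℝ

open Set Filter Topology
open scoped Nat

def picardIterate (a C L T : ℝ) (n : ℕ) (s : ℝ) : ℝ :=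
  a * ∑ k ∈ Finset.range n, (L * (T - s)) ^ k / k ! + C * ((L * (T - s)) ^ n / n !)

theorem continuous_picardIterate (a C L T : ℝ) (n : ℕ) :
    Continuous (picardIterate a C L T n) := by
  unfold picardIterate
  fun_prop

theorem mul_integral_pow_div_factorial (L T s : ℝ) (k : ℕ) :
    L * ∫ r in s..T, (L * (T - r)) ^ k / k ! = (L * (T - s)) ^ (k + 1) / (k + 1)! := by
  have hshift :
      ∫ r in s..T, (L * (T - r)) ^ k / k ! = ∫ r in (0 : ℝ)..T - s, (L * r) ^ k / k ! := by
    simpa only [sub_self] using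
      intervalIntegral.integral_comp_sub_left (a := s) (b := T) (fun r => (L * r) ^ k / k !) T
  simp_rw [hshift, mul_pow, intervalIntegral.integral_div, intervalIntegral.integral_const_mul,
    integral_pow, Nat.factorial_succ]
  push_cast
  field_simp
  ring

theorem picardIterate_succ (a C L T s : ℝ) (n : ℕ) :
    a + L * ∫ r in s..T, picardIterate a C L T n r = picardIterate a C L T (n + 1) s := by
  have hterm : ∀ k : ℕ, IntervalIntegrable (fun r => (L * (T - r)) ^ k / k !) volume s T :=
    fun k => (by fun_prop : Continuous fun r : ℝ => (L * (T - r)) ^ k / k !).intervalIntegrable _ _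
  unfold picardIterate
  rw [intervalIntegral.integral_add
      ((by fun_prop : Continuous fun r => a * ∑ k ∈ Finset.range n, (L * (T - r)) ^ k / k !)
        |>.intervalIntegrable _ _) ((hterm n).const_mul C),
    intervalIntegral.integral_const_mul, intervalIntegral.integral_const_mul,
    intervalIntegral.integral_finsetSum fun k _ => hterm k, mul_add, mul_left_comm,
    Finset.mul_sum, mul_left_comm L C, mul_integral_pow_div_factorial, Finset.sum_range_succ' _ n]
  simp only [mul_integral_pow_div_factorial, pow_zero, Nat.factorial_zero, Nat.cast_one,
    div_one]
  ring

theorem tendsto_picardIterate (a C L T s : ℝ) :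
    Tendsto (fun n => picardIterate a C L T n s) atTop (𝓝 (a * Real.exp (L * (T - s)))) := by
  have hexp := (NormedSpace.expSeries_div_hasSum_exp (L * (T - s))).tendsto_sum_nat
  rw [← Real.exp_eq_exp_ℝ] at hexp
  simpa only [picardIterate, mul_zero, add_zero] using (hexp.const_mul a).add
    ((FloorSemiring.tendsto_pow_div_factorial_atTop (L * (T - s))).const_mul C)

theorem le_mul_exp_of_le_add_mul_integral {w : ℝ → ℝ} {a C L t T : ℝ}
    (hC : ∀ s ∈ Icc t T, w s ≤ C)
    (hstep : ∀ ψ : ℝ → ℝ, Continuous ψ → (∀ s ∈ Icc t T, w s ≤ ψ s) →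
      ∀ s ∈ Icc t T, w s ≤ a + L * ∫ r in s..T, ψ r) :
    ∀ s ∈ Icc t T, w s ≤ a * Real.exp (L * (T - s)) := by
  have hiter : ∀ n, ∀ s ∈ Icc t T, w s ≤ picardIterate a C L T n s := by
    intro n
    induction n with
    | zero => simpa [picardIterate] using hC
    | succ n ih =>
      intro s hs
      rw [← picardIterate_succ]
      exact hstep _ (continuous_picardIterate a C L T n) ih s hs
  exact fun s hs => ge_of_tendsto' (tendsto_picardIterate a C L T s) fun n => hiter n s hs

theorem abs_integral_le_mul_of_abs_le_mul {Ω : Type*} [MeasurableSpace Ω] {P : Measure Ω}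
    {h W : Ω → ℝ} {K v : ℝ} (hK : 0 ≤ K) (hv : 0 ≤ v) (hh : ∀ ω, |h ω| ≤ K * W ω)
    (hW : ∫⁻ ω, ENNReal.ofReal (W ω) ∂P ≤ ENNReal.ofReal v) :
    |∫ ω, h ω ∂P| ≤ K * v := by
  have hlint : ∫⁻ ω, ENNReal.ofReal |h ω| ∂P ≤ ENNReal.ofReal (K * v) :=
    calc ∫⁻ ω, ENNReal.ofReal |h ω| ∂P
        ≤ ∫⁻ ω, ENNReal.ofReal K * ENNReal.ofReal (W ω) ∂P := lintegral_mono fun ω => by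
          rw [← ENNReal.ofReal_mul hK]
          exact ofReal_le_ofReal (hh ω)
      _ = ENNReal.ofReal K * ∫⁻ ω, ENNReal.ofReal (W ω) ∂P :=
          lintegral_const_mul' _ _ ofReal_ne_top
      _ ≤ ENNReal.ofReal (K * v) := by
          rw [ENNReal.ofReal_mul hK]
          gcongr
  calc |∫ ω, h ω ∂P| ≤ (∫⁻ ω, ENNReal.ofReal |h ω| ∂P).toReal := by
        simpa [Real.norm_eq_abs] using norm_integral_le_lintegral_norm h
    _ ≤ K * v := toReal_le_of_le_ofReal (mul_nonneg hK hv) hlint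

theorem le_toReal_mul_of_ofReal_div_le {a v : ℝ} {S : ℝ≥0∞} (hv : 0 < v) (hS : S ≠ ⊤)
    (h : ENNReal.ofReal (a / v) ≤ S) : a ≤ S.toReal * v :=
  (div_le_iff₀ hv).1 ((ofReal_le_iff_le_toReal hS).1 h)

section FixedPoint

variable {E Ω : Type*} [MeasurableSpace Ω] {P : Measure Ω} {O : Set E} {X : ℝ → ℝ → E → Ω → E}
  {f : ℝ → E → ℝ → ℝ} {g : E → ℝ} {V u : ℝ → E → ℝ} {L T t : ℝ}

theorem abs_le_add_mul_integral_of_abs_le {ψ : ℝ → ℝ} {A B s : ℝ} {x : E}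
    (hL : 0 ≤ L) (hA : 0 ≤ A) (hB : 0 ≤ B) (hs : s ∈ Icc 0 T) (hVx : 0 ≤ V s x)
    (hXO : ∀ r ∈ Icc s T, ∀ ω, X s r x ω ∈ O)
    (hVX : ∀ r ∈ Icc s T, ∫⁻ ω, ENNReal.ofReal (V r (X s r x ω)) ∂P ≤ ENNReal.ofReal (V s x))
    (hfLip : ∀ r ∈ Icc s T, ∀ y ∈ O, ∀ v w : ℝ, |f r y v - f r y w| ≤ L * |v - w|)
    (hgA : ∀ y ∈ O, |g y| ≤ A * V T y)
    (hfB : ∀ r ∈ Icc s T, ∀ y ∈ O, |T * f r y 0| ≤ B * V r y)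
    (hψ : Continuous ψ) (hψ0 : ∀ r ∈ Icc s T, 0 ≤ ψ r)
    (hu : ∀ r ∈ Icc s T, ∀ y ∈ O, |u r y| ≤ ψ r * V r y)
    (hux : u s x = (∫ ω, g (X s T x ω) ∂P)
      + ∫ r in Icc s T, ∫ ω, f r (X s r x ω) (u r (X s r x ω)) ∂P) :
    |u s x| ≤ (A + B + L * ∫ r in s..T, ψ r) * V s x := by
  have hTmem : T ∈ Icc s T := ⟨hs.2, le_rfl⟩
  have hgterm : |∫ ω, g (X s T x ω) ∂P| ≤ A * V s x :=
    abs_integral_le_mul_of_abs_le_mul hA hVx (fun ω => hgA _ (hXO T hTmem ω)) (hVX T hTmem)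
  -- On `[s, T)` we have `T > 0`, so `B / T` is a genuine bound; the endpoint `T` is null.
  have hfterm : ∀ r ∈ Ico s T,
      |∫ ω, f r (X s r x ω) (u r (X s r x ω)) ∂P| ≤ (B / T + L * ψ r) * V s x := by
    intro r hr
    have hT : 0 < T := hs.1.trans_lt (hr.1.trans_lt hr.2)
    have hr' : r ∈ Icc s T := Ico_subset_Icc_self hr
    have hK : 0 ≤ B / T + L * ψ r := by have := hψ0 r hr'; positivity
    refine abs_integral_le_mul_of_abs_le_mul hK hVx (fun ω => ?_) (hVX r hr')
    have hy := hXO r hr' ω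
    set y := X s r x ω
    have hf0 : |f r y 0| ≤ B / T * V r y := by
      rw [div_mul_eq_mul_div, le_div_iff₀ hT, mul_comm]
      simpa only [abs_mul, abs_of_pos hT] using hfB r hr' y hy
    have hlip : |f r y (u r y)| - |f r y 0| ≤ L * |u r y| := by
      simpa only [sub_zero] using
        (abs_sub_abs_le_abs_sub _ _).trans (hfLip r hr' y hy (u r y) 0)
    calc |f r y (u r y)| ≤ B / T * V r y + L * (ψ r * V r y) := by
          linarith [mul_le_mul_of_nonneg_left (hu r hr' y hy) hL]
      _ = (B / T + L * ψ r) * V r y := by ring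
  have hint : |∫ r in Icc s T, ∫ ω, f r (X s r x ω) (u r (X s r x ω)) ∂P|
      ≤ (B / T * (T - s) + L * ∫ r in s..T, ψ r) * V s x := by
    have hG : Continuous fun r => (B / T + L * ψ r) * V s x := by fun_prop
    rw [integral_Icc_eq_integral_Ico]
    refine (norm_integral_le_of_norm_le
      (f := fun r => ∫ ω, f r (X s r x ω) (u r (X s r x ω)) ∂P)
      (hG.integrableOn_Icc.mono_set Ico_subset_Icc_self)
      (ae_restrict_of_forall_mem measurableSet_Ico hfterm)).trans_eq ?_
    rw [← integral_Icc_eq_integral_Ico, integral_Icc_eq_integral_Ioc,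
      ← intervalIntegral.integral_of_le hs.2, intervalIntegral.integral_mul_const,
      intervalIntegral.integral_add intervalIntegrable_const
        ((hψ.const_mul L).intervalIntegrable _ _),
      intervalIntegral.integral_const_mul, intervalIntegral.integral_const, smul_eq_mul,
      mul_comm (T - s)]
  have hBT : B / T * (T - s) ≤ B := by
    rw [div_mul_eq_mul_div, mul_div_assoc]
    exact mul_le_of_le_one_right hB (div_le_one_of_le₀ (by linarith [hs.1]) (hs.1.trans hs.2))
  rw [hux]
  calc _ ≤ |∫ ω, g (X s T x ω) ∂P|
        + |∫ r in Icc s T, ∫ ω, f r (X s r x ω) (u r (X s r x ω)) ∂P| := abs_add_le _ _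
    _ ≤ A * V s x + (B / T * (T - s) + L * ∫ r in s..T, ψ r) * V s x := add_le_add hgterm hint
    _ = (A + B / T * (T - s) + L * ∫ r in s..T, ψ r) * V s x := by ring
    _ ≤ (A + B + L * ∫ r in s..T, ψ r) * V s x := by gcongr

theorem toReal_iSup_le_mul_exp {A B : ℝ} {S : ℝ≥0∞} (hL : 0 ≤ L) (hA : 0 ≤ A) (hB : 0 ≤ B)
    (ht : t ∈ Icc 0 T)
    (hXO : ∀ t ∈ Icc (0 : ℝ) T, ∀ s ∈ Icc t T, ∀ x ∈ O, ∀ ω, X t s x ω ∈ O)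
    (hVpos : ∀ t ∈ Icc (0 : ℝ) T, ∀ x ∈ O, 0 < V t x)
    (hVX : ∀ t ∈ Icc (0 : ℝ) T, ∀ s ∈ Icc t T, ∀ x ∈ O,
      ∫⁻ ω, ENNReal.ofReal (V s (X t s x ω)) ∂P ≤ ENNReal.ofReal (V t x))
    (hfLip : ∀ t ∈ Icc (0 : ℝ) T, ∀ x ∈ O, ∀ v w : ℝ, |f t x v - f t x w| ≤ L * |v - w|)
    (hgA : ∀ y ∈ O, |g y| ≤ A * V T y)
    (hfB : ∀ r ∈ Icc t T, ∀ y ∈ O, |T * f r y 0| ≤ B * V r y)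
    (hS : S ≠ ⊤) (huS : ∀ s ∈ Icc t T, ⨆ x : O, ENNReal.ofReal (|u s x| / V s x) ≤ S)
    (hueq : ∀ t ∈ Icc (0 : ℝ) T, ∀ x ∈ O, u t x = (∫ ω, g (X t T x ω) ∂P)
      + ∫ s in Icc t T, ∫ ω, f s (X t s x ω) (u s (X t s x ω)) ∂P) :
    (⨆ x : O, ENNReal.ofReal (|u t x| / V t x)).toReal ≤ (A + B) * Real.exp (L * (T - t)) := by
  set w : ℝ → ℝ := fun s => (⨆ x : O, ENNReal.ofReal (|u s x| / V s x)).toReal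
  have hmem : ∀ {s}, s ∈ Icc t T → s ∈ Icc 0 T := fun hs => ⟨ht.1.trans hs.1, hs.2⟩
  have huw : ∀ s ∈ Icc t T, ∀ y ∈ O, |u s y| ≤ w s * V s y := fun s hs y hy =>
    le_toReal_mul_of_ofReal_div_le (hVpos s (hmem hs) y hy)
      (ne_top_of_le_ne_top hS (huS s hs)) (le_iSup_of_le ⟨y, hy⟩ le_rfl)
  refine le_mul_exp_of_le_add_mul_integral (w := w) (C := S.toReal)
    (fun s hs => toReal_mono hS (huS s hs)) (fun ψ hψ hwψ s hs => ?_) t ⟨le_rfl, ht.2⟩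
  have hsub : Icc s T ⊆ Icc t T := Icc_subset_Icc_left hs.1
  have hψ0 : ∀ r ∈ Icc s T, 0 ≤ ψ r := fun r hr => toReal_nonneg.trans (hwψ r (hsub hr))
  have hψint : 0 ≤ ∫ r in s..T, ψ r := intervalIntegral.integral_nonneg hs.2 hψ0
  refine toReal_le_of_le_ofReal (by positivity)
    (iSup_le fun x => ofReal_le_ofReal ((div_le_iff₀ (hVpos s (hmem hs) x.1 x.2)).2 ?_))
  exact abs_le_add_mul_integral_of_abs_le hL hA hB (hmem hs) (hVpos s (hmem hs) x.1 x.2).le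
    (fun r hr => hXO s (hmem hs) r hr x.1 x.2) (fun r hr => hVX s (hmem hs) r hr x.1 x.2)
    (fun r hr => hfLip r (hmem (hsub hr))) hgA (fun r hr => hfB r (hsub hr)) hψ hψ0
    (fun r hr y hy => (huw r (hsub hr) y hy).trans
      (mul_le_mul_of_nonneg_right (hwψ r (hsub hr)) (hVpos r (hmem (hsub hr)) y hy).le))
    (hueq s (hmem hs) x.1 x.2)

theorem iSup_le_mul_exp (hL : 0 ≤ L) (ht : t ∈ Icc 0 T)
    (hXO : ∀ t ∈ Icc (0 : ℝ) T, ∀ s ∈ Icc t T, ∀ x ∈ O, ∀ ω, X t s x ω ∈ O)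
    (hVpos : ∀ t ∈ Icc (0 : ℝ) T, ∀ x ∈ O, 0 < V t x)
    (hVX : ∀ t ∈ Icc (0 : ℝ) T, ∀ s ∈ Icc t T, ∀ x ∈ O,
      ∫⁻ ω, ENNReal.ofReal (V s (X t s x ω)) ∂P ≤ ENNReal.ofReal (V t x))
    (hfLip : ∀ t ∈ Icc (0 : ℝ) T, ∀ x ∈ O, ∀ v w : ℝ, |f t x v - f t x w| ≤ L * |v - w|)
    (hg : (⨆ x : O, ENNReal.ofReal (|g x| / V T x)) ≠ ⊤)
    (hf : (⨆ (x : O) (s : Icc t T), ENNReal.ofReal (|T * f s x 0| / V s x)) ≠ ⊤)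
    (hu : (⨆ (y : O) (s : Icc (0 : ℝ) T), ENNReal.ofReal (|u s y| / V s y)) ≠ ⊤)
    (hueq : ∀ t ∈ Icc (0 : ℝ) T, ∀ x ∈ O, u t x = (∫ ω, g (X t T x ω) ∂P)
      + ∫ s in Icc t T, ∫ ω, f s (X t s x ω) (u s (X t s x ω)) ∂P) :
    ⨆ x : O, ENNReal.ofReal (|u t x| / V t x)
      ≤ ((⨆ x : O, ENNReal.ofReal (|g x| / V T x))
          + ⨆ (x : O) (s : Icc t T), ENNReal.ofReal (|T * f s x 0| / V s x))
        * ENNReal.ofReal (Real.exp (L * (T - t))) := by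
  have hmem : ∀ {s}, s ∈ Icc t T → s ∈ Icc 0 T := fun hs => ⟨ht.1.trans hs.1, hs.2⟩
  have hgA : ∀ y ∈ O, |g y| ≤ (⨆ x : O, ENNReal.ofReal (|g x| / V T x)).toReal * V T y :=
    fun y hy => le_toReal_mul_of_ofReal_div_le (hVpos T ⟨ht.1.trans ht.2, le_rfl⟩ y hy) hg
      (le_iSup_of_le ⟨y, hy⟩ le_rfl)
  have hfB : ∀ r ∈ Icc t T, ∀ y ∈ O, |T * f r y 0|
      ≤ (⨆ (x : O) (s : Icc t T), ENNReal.ofReal (|T * f s x 0| / V s x)).toReal * V r y :=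
    fun r hr y hy => le_toReal_mul_of_ofReal_div_le (hVpos r (hmem hr) y hy) hf
      (le_iSup₂_of_le (f := fun (x : O) (s : Icc t T) =>
        ENNReal.ofReal (|T * f s x 0| / V s x)) ⟨y, hy⟩ ⟨r, hr⟩ le_rfl)
  have huS : ∀ s ∈ Icc t T, ⨆ x : O, ENNReal.ofReal (|u s x| / V s x)
      ≤ ⨆ (y : O) (s : Icc (0 : ℝ) T), ENNReal.ofReal (|u s y| / V s y) :=
    fun s hs => iSup_le fun x => le_iSup₂_of_le x ⟨s, hmem hs⟩ le_rfl
  have hbound := toReal_iSup_le_mul_exp hL toReal_nonneg toReal_nonneg ht hXO hVpos hVX hfLip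
    hgA hfB hu huS hueq
  rw [← ofReal_toReal (ne_top_of_le_ne_top hu (huS t ⟨le_rfl, ht.2⟩)), ← ofReal_toReal hg,
    ← ofReal_toReal hf, ← ENNReal.ofReal_add toReal_nonneg toReal_nonneg,
    ← ENNReal.ofReal_mul (by positivity)]
  exact ofReal_le_ofReal hbound

end FixedPoint

theorem stmt_1_general
    (d : ℕ) (L T c : ℝ) (hL : 0 ≤ L) (hT : 0 ≤ T)
    (O : Set (Vec d)) (hOne : O.Nonempty)
    (Ω : Type) [MeasurableSpace Ω] (P : Measure Ω)
    (X : ℝ → ℝ → Vec d → Ω → Vec d)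
    (hXO : ∀ t ∈ Set.Icc (0 : ℝ) T, ∀ s ∈ Set.Icc t T, ∀ x ∈ O, ∀ ω, X t s x ω ∈ O)
    (f : ℝ → Vec d → ℝ → ℝ) (g : Vec d → ℝ) (V : ℝ → Vec d → ℝ)
    (hVpos : ∀ t ∈ Set.Icc (0 : ℝ) T, ∀ x ∈ O, 0 < V t x)
    (hf0 : ∀ t ∈ Set.Icc (0 : ℝ) T, ∀ x ∈ O, |f t x 0| ≤ c * V t x)
    (hgV : ∀ x ∈ O, |g x| ≤ c * V T x)
    (hVX : ∀ t ∈ Set.Icc (0 : ℝ) T, ∀ s ∈ Set.Icc t T, ∀ x ∈ O,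
      (∫⁻ ω, ENNReal.ofReal (V s (X t s x ω)) ∂P) ≤ ENNReal.ofReal (V t x))
    (hfLip : ∀ t ∈ Set.Icc (0 : ℝ) T, ∀ x ∈ O, ∀ v w : ℝ,
      |f t x v - f t x w| ≤ L * |v - w|)
    -- the given measurable solution `u`
    (u : ℝ → Vec d → ℝ)
    (hufin : ∀ t ∈ Set.Icc (0 : ℝ) T, ∀ x ∈ O,
      (∫⁻ ω, ENNReal.ofReal |g (X t T x ω)| ∂P)
          + (∫⁻ s in Set.Icc t T, ∫⁻ ω, ENNReal.ofReal |f s (X t s x ω) (u s (X t s x ω))| ∂P)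
          + (⨆ (y : O) (s : Set.Icc (0 : ℝ) T), ENNReal.ofReal (|u s.1 y.1| / V s.1 y.1))
        < ⊤)
    (hueq : ∀ t ∈ Set.Icc (0 : ℝ) T, ∀ x ∈ O,
      u t x = (∫ ω, g (X t T x ω) ∂P)
        + ∫ s in Set.Icc t T, (∫ ω, f s (X t s x ω) (u s (X t s x ω)) ∂P)) :
    ∀ t ∈ Set.Icc (0 : ℝ) T,
      (⨆ x : O, ENNReal.ofReal (|u t x.1| / V t x.1))
        ≤ ((⨆ x : O, ENNReal.ofReal (|g x.1| / V T x.1))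
            + ⨆ (x : O) (s : Set.Icc t T), ENNReal.ofReal (|T * f s.1 x.1 0| / V s.1 x.1))
          * ENNReal.ofReal (Real.exp (L * (T - t))) := by
  intro t ht
  have hTT : T ∈ Icc 0 T := ⟨hT, le_rfl⟩
  have hmem : ∀ {s}, s ∈ Icc t T → s ∈ Icc 0 T := fun hs => ⟨ht.1.trans hs.1, hs.2⟩
  have hg : (⨆ x : O, ENNReal.ofReal (|g x| / V T x)) ≠ ⊤ :=
    ne_top_of_le_ne_top ofReal_ne_top <| iSup_le fun x =>
      ofReal_le_ofReal <| (div_le_iff₀ (hVpos T hTT x.1 x.2)).2 (hgV x.1 x.2)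
  have hf : (⨆ (x : O) (s : Icc t T), ENNReal.ofReal (|T * f s x 0| / V s x)) ≠ ⊤ :=
    ne_top_of_le_ne_top (ofReal_ne_top (r := T * c)) <| iSup₂_le fun x s =>
      ofReal_le_ofReal <| (div_le_iff₀ (hVpos s (hmem s.2) x.1 x.2)).2 <| by
        rw [abs_mul, abs_of_nonneg hT, mul_assoc]
        exact mul_le_mul_of_nonneg_left (hf0 s (hmem s.2) x.1 x.2) hT
  have hu : (⨆ (y : O) (s : Icc (0 : ℝ) T), ENNReal.ofReal (|u s y| / V s y)) ≠ ⊤ := by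
    obtain ⟨x, hx⟩ := hOne
    exact (le_add_self.trans_lt (hufin 0 ⟨le_rfl, hT⟩ x hx)).ne
  exact iSup_le_mul_exp hL ht hXO hVpos hVX hfLip hg hf hu hueq

/-- Proposition `b01`, item (ii).
Under the stated assumptions, if the measurable function `u : [0,T] × O → ℝ`
satisfies the finiteness condition and the stochastic fixed point equation
`u(t,x) = E[g(X^x_{t,T})] + ∫_t^T E[f(s,X^x_{t,s},u(s,X^x_{t,s}))] ds`, then for
all `t ∈ [0,T]` it holds that
`sup_{x∈O} |u(t,x)|/V(t,x)
  ≤ [sup_{x∈O} |g(x)|/V(T,x) + sup_{x∈O} sup_{s∈[t,T]} |T f(s,x,0)|/V(s,x)] e^{L(T-t)}`. -/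
theorem stmt_1
    (d : ℕ) (L T c : ℝ) (hL : 0 ≤ L) (hT : 0 ≤ T) (hc : 0 ≤ c)
    (O : Set (Vec d)) (hO : MeasurableSet O) (hOne : O.Nonempty)
    (Ω : Type) [MeasurableSpace Ω] (P : Measure Ω) [IsProbabilityMeasure P]
    (X : ℝ → ℝ → Vec d → Ω → Vec d)
    (hXO : ∀ t ∈ Set.Icc (0 : ℝ) T, ∀ s ∈ Set.Icc t T, ∀ x ∈ O, ∀ ω, X t s x ω ∈ O)
    (hXψ : ∀ ψ : ℝ → Vec d → ℝ≥0∞, Measurable (Function.uncurry ψ) →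
      Measurable fun q : {p : (ℝ × ℝ) × Vec d //
          p.1.1 ∈ Set.Icc 0 T ∧ p.1.2 ∈ Set.Icc p.1.1 T ∧ p.2 ∈ O} =>
        ∫⁻ ω, ψ q.1.1.2 (X q.1.1.1 q.1.1.2 q.1.2 ω) ∂P)
    (f : ℝ → Vec d → ℝ → ℝ) (g : Vec d → ℝ) (V : ℝ → Vec d → ℝ)
    (hf : Measurable fun q : {p : (ℝ × Vec d) × ℝ // p.1.1 ∈ Set.Icc 0 T ∧ p.1.2 ∈ O} =>
      f q.1.1.1 q.1.1.2 q.1.2)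
    (hg : Measurable fun x : O => g x.1)
    (hV : Measurable fun q : {p : ℝ × Vec d // p.1 ∈ Set.Icc 0 T ∧ p.2 ∈ O} => V q.1.1 q.1.2)
    (hVpos : ∀ t ∈ Set.Icc (0 : ℝ) T, ∀ x ∈ O, 0 < V t x)
    (hf0 : ∀ t ∈ Set.Icc (0 : ℝ) T, ∀ x ∈ O, |f t x 0| ≤ c * V t x)
    (hgV : ∀ x ∈ O, |g x| ≤ c * V T x)
    (hVX : ∀ t ∈ Set.Icc (0 : ℝ) T, ∀ s ∈ Set.Icc t T, ∀ x ∈ O,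
      (∫⁻ ω, ENNReal.ofReal (V s (X t s x ω)) ∂P) ≤ ENNReal.ofReal (V t x))
    (hfLip : ∀ t ∈ Set.Icc (0 : ℝ) T, ∀ x ∈ O, ∀ v w : ℝ,
      |f t x v - f t x w| ≤ L * |v - w|)
    -- the given measurable solution `u`
    (u : ℝ → Vec d → ℝ)
    (humeas : Measurable fun q : {p : ℝ × Vec d // p.1 ∈ Set.Icc 0 T ∧ p.2 ∈ O} =>
      u q.1.1 q.1.2)
    (hufin : ∀ t ∈ Set.Icc (0 : ℝ) T, ∀ x ∈ O,
      (∫⁻ ω, ENNReal.ofReal |g (X t T x ω)| ∂P)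
          + (∫⁻ s in Set.Icc t T, ∫⁻ ω, ENNReal.ofReal |f s (X t s x ω) (u s (X t s x ω))| ∂P)
          + (⨆ (y : O) (s : Set.Icc (0 : ℝ) T), ENNReal.ofReal (|u s.1 y.1| / V s.1 y.1))
        < ⊤)
    (hueq : ∀ t ∈ Set.Icc (0 : ℝ) T, ∀ x ∈ O,
      u t x = (∫ ω, g (X t T x ω) ∂P)
        + ∫ s in Set.Icc t T, (∫ ω, f s (X t s x ω) (u s (X t s x ω)) ∂P)) :
    ∀ t ∈ Set.Icc (0 : ℝ) T,
      (⨆ x : O, ENNReal.ofReal (|u t x.1| / V t x.1))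
        ≤ ((⨆ x : O, ENNReal.ofReal (|g x.1| / V T x.1))
            + ⨆ (x : O) (s : Set.Icc t T), ENNReal.ofReal (|T * f s.1 x.1 0| / V s.1 x.1))
          * ENNReal.ofReal (Real.exp (L * (T - t))) :=
  stmt_1_general d L T c hL hT O hOne Ω P X hXO f g V hVpos hf0 hgV hVX hfLip u hufin hueq
end
end

section
/- Let N ∈ ℕ, a, b, c ∈ [0,∞), α ∈ ℝ, β ∈ [α,∞), p ∈ [1,∞), let f_n : [α,β] → [0,∞], n ∈ ℕ₀, be measurable, assume sup_{s ∈ [α,β]} f₀(s) < ∞, and assume for all n ∈ {1,2,…,N} and t ∈ [α,β] that f_n(t) ≤ a cⁿ + Σ_{ℓ=0}^{n−1} b c^{n−ℓ−1} (∫_α^t (f_ℓ(s))^p ds)^{1/p}. Then f_N(β) ≤ [ a + b(β−α)^{1/p} · sup_{s ∈ [α,β]} f₀(s) ] · [ max_{k ∈ {0,1,…,N}} c^{N−k}/(k!)^{1/p} ] · [ 1 + b(β−α)^{1/p} ]^{N−1}. -/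
/-!
With `τ_j(t) = ((t - α)^j / j!)^{1/p}`, the `L^p(α, t)` norm of `τ_j` is `τ_{j+1}(t)`. Put
`S = sup f₀` and `g_k = a c τ_k + b S τ_{k+1}`, so that `‖g_k‖_{L^p(α,t)} ≤ g_{k+1}(t)` by
Minkowski. The binomial combinations `Σ_k C(m,k) b^k c^{m-k} g_k` obey the Pascal rule in `m`,
which makes them a supersolution of the recursion; by strong induction and Minkowski again,
`f_{m+1} ≤ Σ_k C(m,k) b^k c^{m-k} g_k`. At `t = β` each `c^{m-k} g_k(β)` is at most
`(a + b (β-α)^{1/p} S) · max_k c^{m+1-k}/(k!)^{1/p} · ((β-α)^{1/p})^k`, and the binomial theorem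
sums these to the stated bound.
-/

open MeasureTheory ENNReal Finset

namespace LpGronwall

section BinomialSum

variable {R : Type*} [CommSemiring R]

def binomialSum (b c : R) (g : ℕ → R) (m : ℕ) : R :=
  ∑ i ∈ range (m + 1), (m.choose i : R) * b ^ i * c ^ (m - i) * g i

variable (b c : R)

theorem binomialSum_zero (g : ℕ → R) : binomialSum b c g 0 = g 0 := by
  simp [binomialSum]

theorem binomialSum_succ (g : ℕ → R) (m : ℕ) :
    binomialSum b c g (m + 1)
      = c * binomialSum b c g m + b * binomialSum b c (fun i => g (i + 1)) m := by
  have := sum_choose_succ_mul (fun i j => b ^ i * c ^ j * g i) m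
  simp only [← mul_assoc] at this
  rw [binomialSum, this, binomialSum, binomialSum, mul_sum, mul_sum]
  congr 1 <;> refine sum_congr rfl fun i hi => ?_
  · rw [Nat.sub_add_comm (Nat.lt_succ_iff.mp (mem_range.mp hi)), pow_succ]
    ring
  · ring

theorem binomialSum_eq_add_sum (g : ℕ → R) (m : ℕ) :
    binomialSum b c g m = c ^ m * g 0
      + ∑ i ∈ range m, b * c ^ (m - i - 1) * binomialSum b c (fun k => g (k + 1)) i := by
  induction m with
  | zero => simp [binomialSum_zero]
  | succ m ih =>
    have hsum : ∑ i ∈ range m, b * c ^ (m + 1 - i - 1) * binomialSum b c (fun k => g (k + 1)) i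
        = c * ∑ i ∈ range m, b * c ^ (m - i - 1) * binomialSum b c (fun k => g (k + 1)) i := by
      rw [mul_sum]
      refine sum_congr rfl fun i hi => ?_
      rw [show m + 1 - i - 1 = m - i - 1 + 1 by have := mem_range.mp hi; omega, pow_succ]
      ring
    rw [binomialSum_succ, ih, sum_range_succ, hsum, Nat.add_sub_cancel_left, Nat.sub_self,
      pow_zero, mul_one, pow_succ]
    ring

theorem binomialSum_mono [PartialOrder R] [IsOrderedRing R] {g h : ℕ → R} {m : ℕ}
    (hb : 0 ≤ b) (hc : 0 ≤ c) (hgh : ∀ i, g i ≤ h i) :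
    binomialSum b c g m ≤ binomialSum b c h m := by
  unfold binomialSum
  gcongr with i
  exact hgh i

theorem binomialSum_le [PartialOrder R] [IsOrderedRing R] {g : ℕ → R} {m : ℕ} {K x : R}
    (hb : 0 ≤ b) (h : ∀ i ≤ m, c ^ (m - i) * g i ≤ K * x ^ i) :
    binomialSum b c g m ≤ K * (b * x + 1) ^ m := by
  rw [add_pow, mul_sum, binomialSum]
  refine sum_le_sum fun i hi => ?_
  have hterm := h i (Nat.lt_succ_iff.mp (mem_range.mp hi))
  calc (m.choose i : R) * b ^ i * c ^ (m - i) * g i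
      = (m.choose i : R) * b ^ i * (c ^ (m - i) * g i) := by ring
    _ ≤ (m.choose i : R) * b ^ i * (K * x ^ i) := by gcongr
    _ = K * ((b * x) ^ i * 1 ^ (m - i) * m.choose i) := by ring

end BinomialSum

section LpSeminorm

variable {X : Type*} [MeasurableSpace X] {μ : Measure X} {p : ℝ}

theorem eLpNorm'_restrict_mono {s : Set X} (hs : MeasurableSet s) (hp : 0 ≤ p)
    {g h : X → ℝ≥0∞} (hgh : ∀ x ∈ s, g x ≤ h x) :
    eLpNorm' g p (μ.restrict s) ≤ eLpNorm' h p (μ.restrict s) :=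
  eLpNorm'_mono_enorm_ae hp ((ae_restrict_iff' hs).2 (ae_of_all _ hgh))

theorem eLpNorm'_const_mul (r : ℝ≥0∞) {g : X → ℝ≥0∞} (hg : Measurable g) (hp : 0 < p) :
    eLpNorm' (fun x => r * g x) p μ = r * eLpNorm' g p μ := by
  simp only [eLpNorm', enorm_eq_self, mul_rpow_of_nonneg _ _ hp.le]
  rw [lintegral_const_mul _ (hg.pow_const p), mul_rpow_of_nonneg _ _ (by positivity),
    ← rpow_mul, mul_one_div_cancel hp.ne', rpow_one]

theorem eLpNorm'_sum_const_mul_le {ι : Type*} (s : Finset ι) (r : ι → ℝ≥0∞)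
    {g : ι → X → ℝ≥0∞} (hg : ∀ i, Measurable (g i)) (hp : 1 ≤ p) :
    eLpNorm' (fun x => ∑ i ∈ s, r i * g i x) p μ ≤ ∑ i ∈ s, r i * eLpNorm' (g i) p μ := by
  have hsum : (fun x => ∑ i ∈ s, r i * g i x) = ∑ i ∈ s, fun x => r i * g i x := by
    ext x; simp
  rw [hsum]
  refine (eLpNorm'_sum_le (fun i _ => ((hg i).const_mul (r i)).aestronglyMeasurable) hp).trans_eq ?_
  exact sum_congr rfl fun i _ => eLpNorm'_const_mul (r i) (hg i) (by linarith)

end LpSeminorm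

section Weight

variable {p α β : ℝ}

noncomputable def weight (p α : ℝ) (j : ℕ) (t : ℝ) : ℝ≥0∞ :=
  ENNReal.ofReal ((t - α) ^ j / j.factorial) ^ (1 / p)

theorem measurable_weight (j : ℕ) : Measurable (weight p α j) := by
  unfold weight; fun_prop

theorem weight_zero (t : ℝ) : weight p α 0 t = 1 := by
  simp [weight]

theorem integral_sub_pow_div_factorial (t : ℝ) (j : ℕ) :
    ∫ s in α..t, (s - α) ^ j / (j.factorial : ℝ) = (t - α) ^ (j + 1) / ((j + 1).factorial : ℝ) := by
  rw [intervalIntegral.integral_div, intervalIntegral.integral_comp_sub_right (· ^ j), integral_pow,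
    Nat.factorial_succ]
  push_cast
  field_simp
  simp

theorem eLpNorm'_weight (hp : 0 < p) {t : ℝ} (ht : α ≤ t) (j : ℕ) :
    eLpNorm' (weight p α j) p (volume.restrict (Set.Icc α t)) = weight p α (j + 1) t := by
  have hpow : ∀ s, weight p α j s ^ p = ENNReal.ofReal ((s - α) ^ j / j.factorial) := fun s => by
    rw [weight, ← rpow_mul, one_div_mul_cancel hp.ne', rpow_one]
  have hnonneg : 0 ≤ᵐ[volume.restrict (Set.Ioc α t)] fun s => (s - α) ^ j / (j.factorial : ℝ) :=
    (ae_restrict_iff' measurableSet_Ioc).2 <| ae_of_all _ fun s hs => by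
      have : 0 ≤ s - α := by linarith [hs.1]
      positivity
  have hint : IntegrableOn (fun s => (s - α) ^ j / (j.factorial : ℝ)) (Set.Ioc α t) :=
    (by fun_prop : Continuous fun s : ℝ => (s - α) ^ j / (j.factorial : ℝ)).integrableOn_Ioc
  simp only [eLpNorm', enorm_eq_self, hpow]
  rw [← Measure.restrict_congr_set Ioc_ae_eq_Icc,
    ← ofReal_integral_eq_lintegral_ofReal hint hnonneg,
    ← intervalIntegral.integral_of_le ht, integral_sub_pow_div_factorial, weight]

theorem eLpNorm'_weight_add_le (hp : 1 ≤ p) {t : ℝ} (ht : α ≤ t) (u v : ℝ≥0∞) (k : ℕ) :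
    eLpNorm' (fun s => u * weight p α k s + v * weight p α (k + 1) s) p
        (volume.restrict (Set.Icc α t))
      ≤ u * weight p α (k + 1) t + v * weight p α (k + 2) t := by
  have hp0 : 0 < p := by linarith
  refine (eLpNorm'_add_le (((measurable_weight k).const_mul u).aestronglyMeasurable)
    (((measurable_weight (k + 1)).const_mul v).aestronglyMeasurable) hp).trans_eq ?_
  rw [eLpNorm'_const_mul u (measurable_weight k) hp0,
    eLpNorm'_const_mul v (measurable_weight _) hp0, eLpNorm'_weight hp0 ht, eLpNorm'_weight hp0 ht]

theorem eLpNorm'_binomialSum_weight_le (hp : 1 ≤ p) {t : ℝ} (ht : α ≤ t) (A B C S : ℝ≥0∞) (i : ℕ) :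
    eLpNorm' (fun s => binomialSum B C
        (fun k => A * C * weight p α k s + B * S * weight p α (k + 1) s) i) p
        (volume.restrict (Set.Icc α t))
      ≤ binomialSum B C (fun k => A * C * weight p α (k + 1) t + B * S * weight p α (k + 2) t) i :=
  calc _ ≤ binomialSum B C (fun k => eLpNorm' (fun s => A * C * weight p α k s
        + B * S * weight p α (k + 1) s) p (volume.restrict (Set.Icc α t))) i :=
      eLpNorm'_sum_const_mul_le _ _ (fun k => ((measurable_weight k).const_mul _).add
        ((measurable_weight (k + 1)).const_mul _)) hp
    _ ≤ _ := binomialSum_mono B C zero_le zero_le fun k => eLpNorm'_weight_add_le hp ht _ _ k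

theorem eLpNorm'_le_mul_weight_one (hp : 0 < p) {t : ℝ} (ht : α ≤ t) {g : ℝ → ℝ≥0∞} {S : ℝ≥0∞}
    (hg : ∀ s ∈ Set.Icc α t, g s ≤ S) :
    eLpNorm' g p (volume.restrict (Set.Icc α t)) ≤ S * weight p α 1 t :=
  calc _ ≤ eLpNorm' (fun s => S * weight p α 0 s) p (volume.restrict (Set.Icc α t)) :=
        eLpNorm'_restrict_mono measurableSet_Icc hp.le fun s hs => by
          simpa only [weight_zero, mul_one] using hg s hs
    _ = S * weight p α 1 t := by
        rw [eLpNorm'_const_mul S (measurable_weight 0) hp, eLpNorm'_weight hp ht]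

theorem le_binomialSum_weight {N : ℕ} {A B C S : ℝ≥0∞} (hp : 1 ≤ p) {f : ℕ → ℝ → ℝ≥0∞}
    (hS : ∀ s ∈ Set.Icc α β, f 0 s ≤ S)
    (hrec : ∀ n, 1 ≤ n → n ≤ N → ∀ t ∈ Set.Icc α β,
      f n t ≤ A * C ^ n + ∑ ℓ ∈ range n,
        B * C ^ (n - ℓ - 1) * eLpNorm' (f ℓ) p (volume.restrict (Set.Icc α t)))
    (m : ℕ) (hm : m < N) {t : ℝ} (ht : t ∈ Set.Icc α β) :
    f (m + 1) t
      ≤ binomialSum B C (fun k => A * C * weight p α k t + B * S * weight p α (k + 1) t) m := by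
  induction m using Nat.strong_induction_on generalizing t with
  | _ m ih =>
  have hp0 : 0 < p := by linarith
  set μ := volume.restrict (Set.Icc α t)
  have hsub : ∀ s ∈ Set.Icc α t, s ∈ Set.Icc α β := fun s hs => ⟨hs.1, hs.2.trans ht.2⟩
  have hnorm_zero : eLpNorm' (f 0) p μ ≤ S * weight p α 1 t :=
    eLpNorm'_le_mul_weight_one hp0 ht.1 fun s hs => hS s (hsub s hs)
  have hnorm_succ : ∀ i < m, eLpNorm' (f (i + 1)) p μ
      ≤ binomialSum B C (fun k => A * C * weight p α (k + 1) t + B * S * weight p α (k + 2) t) i :=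
    fun i hi => (eLpNorm'_restrict_mono measurableSet_Icc hp0.le fun s hs =>
      ih i hi (hi.trans hm) (hsub s hs)).trans (eLpNorm'_binomialSum_weight_le hp ht.1 A B C S i)
  calc f (m + 1) t
      ≤ A * C ^ (m + 1) + ∑ ℓ ∈ range (m + 1), B * C ^ (m + 1 - ℓ - 1) * eLpNorm' (f ℓ) p μ :=
        hrec (m + 1) (Nat.le_add_left 1 m) hm t ht
    _ = A * C ^ (m + 1) + (∑ i ∈ range m, B * C ^ (m - i - 1) * eLpNorm' (f (i + 1)) p μ
          + B * C ^ m * eLpNorm' (f 0) p μ) := by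
        rw [sum_range_succ']
        simp only [Nat.add_sub_add_right, Nat.add_sub_cancel, Nat.sub_zero]
    _ ≤ A * C ^ (m + 1) + (∑ i ∈ range m, B * C ^ (m - i - 1) * binomialSum B C
          (fun k => A * C * weight p α (k + 1) t + B * S * weight p α (k + 2) t) i
          + B * C ^ m * (S * weight p α 1 t)) := by
        gcongr with i hi
        exact hnorm_succ i (mem_range.mp hi)
    _ = _ := by
        rw [binomialSum_eq_add_sum, weight_zero]
        ring


noncomputable def factorialMax (p c : ℝ) (N : ℕ) : ℝ≥0∞ :=
  ⨆ k ∈ range (N + 1), ENNReal.ofReal (c ^ (N - k) / (k.factorial : ℝ) ^ (1 / p))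

theorem ofReal_pow_mul_weight_le {c : ℝ} (hc : 0 ≤ c) (hp : 0 < p) {t : ℝ} (ht : α ≤ t)
    {N k : ℕ} (hk : k ≤ N) :
    ENNReal.ofReal c ^ (N - k) * weight p α k t
      ≤ ENNReal.ofReal ((t - α) ^ (1 / p)) ^ k * factorialMax p c N := by
  have hta : 0 ≤ t - α := sub_nonneg.2 ht
  have hsplit : ENNReal.ofReal c ^ (N - k) * weight p α k t
      = ENNReal.ofReal ((t - α) ^ (1 / p)) ^ k
        * ENNReal.ofReal (c ^ (N - k) / (k.factorial : ℝ) ^ (1 / p)) := by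
    rw [weight, ofReal_rpow_of_nonneg (by positivity) (by positivity), ← ofReal_pow hc,
      ← ofReal_pow (by positivity), ← ofReal_mul (by positivity), ← ofReal_mul (by positivity),
      Real.div_rpow (by positivity) (by positivity), ← Real.rpow_natCast_mul hta,
      ← Real.rpow_mul_natCast hta, mul_comm (k : ℝ)]
    congr 1
    ring
  rw [hsplit]
  gcongr
  exact le_iSup₂ (f := fun i (_ : i ∈ range (N + 1)) =>
    ENNReal.ofReal (c ^ (N - i) / (i.factorial : ℝ) ^ (1 / p))) k (mem_range.2 (by omega))

theorem ofReal_pow_mul_weight_add_le {c : ℝ} (hc : 0 ≤ c) (hp : 0 < p) {t : ℝ} (ht : α ≤ t)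
    (A B S : ℝ≥0∞) {m i : ℕ} (hi : i ≤ m) :
    ENNReal.ofReal c ^ (m - i)
        * (A * ENNReal.ofReal c * weight p α i t + B * S * weight p α (i + 1) t)
      ≤ (A + B * ENNReal.ofReal ((t - α) ^ (1 / p)) * S) * factorialMax p c (m + 1)
        * ENNReal.ofReal ((t - α) ^ (1 / p)) ^ i := by
  set τ := ENNReal.ofReal ((t - α) ^ (1 / p))
  have hi₀ := ofReal_pow_mul_weight_le hc hp ht (N := m + 1) (k := i) (by omega)
  have hi₁ := ofReal_pow_mul_weight_le hc hp ht (N := m + 1) (k := i + 1) (by omega)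
  rw [show m + 1 - i = m - i + 1 by omega, pow_succ] at hi₀
  rw [Nat.add_sub_add_right] at hi₁
  calc _ = A * (ENNReal.ofReal c ^ (m - i) * ENNReal.ofReal c * weight p α i t)
        + B * S * (ENNReal.ofReal c ^ (m - i) * weight p α (i + 1) t) := by ring
    _ ≤ A * (τ ^ i * factorialMax p c (m + 1))
        + B * S * (τ ^ (i + 1) * factorialMax p c (m + 1)) := by gcongr
    _ = _ := by ring

end Weight

end LpGronwall

open LpGronwall in
theorem stmt_15_general
    (N : ℕ) (hN : 1 ≤ N)
    (a b c : ℝ) (ha : 0 ≤ a) (hb : 0 ≤ b) (hc : 0 ≤ c)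
    (α β : ℝ) (hαβ : α ≤ β)
    (p : ℝ) (hp : 1 ≤ p)
    (f : ℕ → ℝ → ℝ≥0∞)
    (hrec : ∀ n, 1 ≤ n → n ≤ N → ∀ t ∈ Set.Icc α β,
      f n t ≤ ENNReal.ofReal (a * c ^ n)
        + ∑ ℓ ∈ Finset.range n,
            ENNReal.ofReal (b * c ^ (n - ℓ - 1))
              * (∫⁻ s in Set.Icc α t, (f ℓ s) ^ p) ^ (1 / p)) :
    f N β ≤
      (ENNReal.ofReal a
          + ENNReal.ofReal (b * (β - α) ^ (1 / p)) * (⨆ s : Set.Icc α β, f 0 s.1))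
        * (⨆ k ∈ Finset.range (N + 1),
            ENNReal.ofReal (c ^ (N - k) / ((k.factorial : ℝ) ^ (1 / p))))
        * ENNReal.ofReal ((1 + b * (β - α) ^ (1 / p)) ^ (N - 1)) := by
  obtain ⟨m, rfl⟩ : ∃ m, N = m + 1 := ⟨N - 1, by omega⟩
  set S := ⨆ s : Set.Icc α β, f 0 s.1
  set τ := ENNReal.ofReal ((β - α) ^ (1 / p))
  have hS : ∀ s ∈ Set.Icc α β, f 0 s ≤ S := fun s hs =>
    le_iSup (fun x : Set.Icc α β => f 0 x.1) ⟨s, hs⟩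
  have hrec' : ∀ n, 1 ≤ n → n ≤ m + 1 → ∀ t ∈ Set.Icc α β,
      f n t ≤ ENNReal.ofReal a * ENNReal.ofReal c ^ n + ∑ ℓ ∈ range n,
        ENNReal.ofReal b * ENNReal.ofReal c ^ (n - ℓ - 1)
          * eLpNorm' (f ℓ) p (volume.restrict (Set.Icc α t)) := fun n hn1 hn t ht => by
    simpa only [ofReal_mul ha, ofReal_mul hb, ofReal_pow hc, eLpNorm', enorm_eq_self]
      using hrec n hn1 hn t ht
  calc f (m + 1) β
      ≤ binomialSum (ENNReal.ofReal b) (ENNReal.ofReal c) (fun k => ENNReal.ofReal a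
          * ENNReal.ofReal c * weight p α k β + ENNReal.ofReal b * S * weight p α (k + 1) β) m :=
        le_binomialSum_weight hp hS hrec' m (lt_add_one m) ⟨hαβ, le_rfl⟩
    _ ≤ (ENNReal.ofReal a + ENNReal.ofReal b * τ * S) * factorialMax p c (m + 1)
          * (ENNReal.ofReal b * τ + 1) ^ m :=
        binomialSum_le _ _ zero_le fun i hi =>
          ofReal_pow_mul_weight_add_le hc (by linarith) hαβ _ _ _ hi
    _ = _ := by
        rw [factorialMax, Nat.add_sub_cancel, ofReal_pow (by positivity),
          ofReal_add zero_le_one (by positivity), ofReal_one, ofReal_mul hb]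
        ring

/-- Gronwall-type inequality, Lemma `g09-1`.
Let `N ∈ ℕ`, `a, b, c ∈ [0,∞)`, `α ∈ ℝ`, `β ∈ [α,∞)`, `p ∈ [1,∞)`, let
`f_n : [α,β] → [0,∞]`, `n ∈ ℕ₀`, be measurable, assume `sup_{s∈[α,β]} f₀(s) < ∞`,
and assume for all `n ∈ {1,…,N}`, `t ∈ [α,β]` that
`f_n(t) ≤ a cⁿ + Σ_{ℓ=0}^{n-1} b c^{n-ℓ-1} (∫_α^t (f_ℓ(s))^p ds)^{1/p}`.  Then
`f_N(β) ≤ [a + b (β-α)^{1/p} sup_{s∈[α,β]} f₀(s)]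
          · [max_{0≤k≤N} c^{N-k}/(k!)^{1/p}] · [1 + b (β-α)^{1/p}]^{N-1}`. -/
theorem stmt_15
    (N : ℕ) (hN : 1 ≤ N)
    (a b c : ℝ) (ha : 0 ≤ a) (hb : 0 ≤ b) (hc : 0 ≤ c)
    (α β : ℝ) (hαβ : α ≤ β)
    (p : ℝ) (hp : 1 ≤ p)
    (f : ℕ → ℝ → ℝ≥0∞)
    (hfmeas : ∀ n, Measurable fun s : Set.Icc α β => f n s.1)
    (hf0 : (⨆ s : Set.Icc α β, f 0 s.1) < ⊤)
    (hrec : ∀ n, 1 ≤ n → n ≤ N → ∀ t ∈ Set.Icc α β,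
      f n t ≤ ENNReal.ofReal (a * c ^ n)
        + ∑ ℓ ∈ Finset.range n,
            ENNReal.ofReal (b * c ^ (n - ℓ - 1))
              * (∫⁻ s in Set.Icc α t, (f ℓ s) ^ p) ^ (1 / p)) :
    f N β ≤
      (ENNReal.ofReal a
          + ENNReal.ofReal (b * (β - α) ^ (1 / p)) * (⨆ s : Set.Icc α β, f 0 s.1))
        * (⨆ k ∈ Finset.range (N + 1),
            ENNReal.ofReal (c ^ (N - k) / ((k.factorial : ℝ) ^ (1 / p))))
        * ENNReal.ofReal ((1 + b * (β - α) ^ (1 / p)) ^ (N - 1)) :=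
  stmt_15_general N hN a b c ha hb hc α β hαβ p hp f hrec
end

section
/- Let N ∈ ℕ, a, b, c ∈ [0,∞), α ∈ ℝ, β ∈ [α,∞), p ∈ [1,∞), let f_n : [α,β] → [0,∞], n ∈ ℕ₀, be measurable, assume sup_{s ∈ [α,β]} f₀(s) < ∞, and assume for all n ∈ {1,2,…,N} and t ∈ [α,β] that f_n(t) ≤ a cⁿ + Σ_{ℓ=0}^{n−1} b c^{n−ℓ−1} (∫_t^β (f_ℓ(s))^p ds)^{1/p}. Then f_N(α) ≤ [ a + b(β−α)^{1/p} · sup_{s ∈ [α,β]} f₀(s) ] · [ max_{k ∈ {0,1,…,N}} c^{N−k}/(k!)^{1/p} ] · [ 1 + b(β−α)^{1/p} ]^{N−1}. -/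
/-!
Write `I g t = (∫_t^β g^p)^{1/p}` and `φ_k t = ((β - t)^k / k!)^{1/p}`. Then `I φ_k = φ_{k+1}`,
and `I` is subadditive by Minkowski's inequality, so on majorants `Σ_k q_k φ_k` the operator `I`
acts as multiplication by `X` on the coefficient polynomial `Σ_k q_k X^k`. Feeding this into the
recursion shows `f_n ≤ Σ_k [X^k] R_n · φ_k` with `R_0 = m := sup f_0` and
`R_n = (a c + b m X) (c + b X)^{n-1}`, the homogenisation of `(a + b m X)(1 + b X)^{n-1}`.
At `t = α` the monomial `c^{N-k} X^k` contributes `c^{N-k} T^k / (k!)^{1/p} ≤ K T^k`, with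
`T = (β - α)^{1/p}` and `K` the maximum in the claim, so `f_N(α) ≤ K (a + b m T)(1 + b T)^{N-1}`.
-/

open MeasureTheory ENNReal Polynomial

noncomputable def tailLpNorm (β p : ℝ) (g : ℝ → ℝ≥0∞) (t : ℝ) : ℝ≥0∞ :=
  (∫⁻ s in Set.Icc t β, g s ^ p) ^ (1 / p)

noncomputable def gronwallBasis (β p : ℝ) (k : ℕ) (t : ℝ) : ℝ≥0∞ :=
  ENNReal.ofReal ((β - t) ^ k / k.factorial) ^ (1 / p)

theorem setLIntegral_Icc_ofReal_sub_pow_div_factorial (k : ℕ) {t β : ℝ} (h : t ≤ β) :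
    ∫⁻ s in Set.Icc t β, ENNReal.ofReal ((β - s) ^ k / k.factorial) =
      ENNReal.ofReal ((β - t) ^ (k + 1) / (k + 1).factorial) := by
  have hint : IntegrableOn (fun s : ℝ => (β - s) ^ k / (k.factorial : ℝ)) (Set.Icc t β) :=
    (by fun_prop : Continuous fun s : ℝ => (β - s) ^ k / (k.factorial : ℝ)).integrableOn_Icc
  have hnonneg :
      0 ≤ᵐ[volume.restrict (Set.Icc t β)] fun s => (β - s) ^ k / (k.factorial : ℝ) := by
    filter_upwards [ae_restrict_mem measurableSet_Icc] with s hs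
    have : 0 ≤ β - s := sub_nonneg.2 hs.2
    positivity
  rw [← ofReal_integral_eq_lintegral_ofReal hint hnonneg, integral_Icc_eq_integral_Ioc,
    ← intervalIntegral.integral_of_le h, intervalIntegral.integral_div,
    intervalIntegral.integral_comp_sub_left (fun u : ℝ => u ^ k) β]
  simp only [sub_self, integral_pow, Nat.factorial_succ]
  push_cast
  field_simp
  simp

section tailLpNorm

variable {β p : ℝ}

theorem tailLpNorm_mono {g h : ℝ → ℝ≥0∞} (hp : 0 ≤ p) (hh : Measurable h) {t : ℝ}
    (hgh : ∀ s ∈ Set.Icc t β, g s ≤ h s) : tailLpNorm β p g t ≤ tailLpNorm β p h t := by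
  unfold tailLpNorm
  gcongr ?_ ^ _
  exact setLIntegral_mono (hh.pow_const p) fun s hs => by gcongr; exact hgh s hs

theorem tailLpNorm_add_le {g h : ℝ → ℝ≥0∞} (hp : 1 ≤ p) (hg : Measurable g)
    (hh : Measurable h) (t : ℝ) :
    tailLpNorm β p (g + h) t ≤ tailLpNorm β p g t + tailLpNorm β p h t :=
  ENNReal.lintegral_Lp_add_le hg.aemeasurable hh.aemeasurable hp

theorem tailLpNorm_const_mul {g : ℝ → ℝ≥0∞} (hp : 0 < p) (hg : Measurable g) (r : ℝ≥0∞)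
    (t : ℝ) : tailLpNorm β p (fun s => r * g s) t = r * tailLpNorm β p g t := by
  unfold tailLpNorm
  simp_rw [ENNReal.mul_rpow_of_nonneg _ _ hp.le]
  rw [lintegral_const_mul _ (hg.pow_const p), ENNReal.mul_rpow_of_nonneg _ _ (by positivity),
    ← ENNReal.rpow_mul, mul_one_div_cancel hp.ne', ENNReal.rpow_one]

theorem measurable_gronwallBasis (k : ℕ) : Measurable (gronwallBasis β p k) :=
  (ENNReal.measurable_ofReal.comp (by fun_prop)).pow_const _

theorem tailLpNorm_gronwallBasis (hp : 0 < p) (k : ℕ) {t : ℝ} (ht : t ≤ β) :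
    tailLpNorm β p (gronwallBasis β p k) t = gronwallBasis β p (k + 1) t := by
  have hpow : ∀ (j : ℕ) (s : ℝ),
      gronwallBasis β p j s ^ p = ENNReal.ofReal ((β - s) ^ j / j.factorial) := fun j s => by
    rw [gronwallBasis, ← ENNReal.rpow_mul, one_div_mul_cancel hp.ne', ENNReal.rpow_one]
  simp only [tailLpNorm, hpow, setLIntegral_Icc_ofReal_sub_pow_div_factorial k ht]
  rfl

end tailLpNorm

noncomputable def gronwallEval (β p t : ℝ) : ℝ≥0∞[X] →ₗ[ℝ≥0∞] ℝ≥0∞ :=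
  lsum fun k => LinearMap.mulRight ℝ≥0∞ (gronwallBasis β p k t)

section gronwallEval

variable {β p : ℝ}

theorem gronwallEval_apply (t : ℝ) (Q : ℝ≥0∞[X]) :
    gronwallEval β p t Q = ∑ k ∈ Q.support, Q.coeff k * gronwallBasis β p k t :=
  lsum_apply _ _

theorem gronwallEval_monomial (t : ℝ) (k : ℕ) (r : ℝ≥0∞) :
    gronwallEval β p t (monomial k r) = r * gronwallBasis β p k t := by
  simp [gronwallEval]

theorem gronwallEval_C_mul_X_pow (t : ℝ) (k : ℕ) (r : ℝ≥0∞) :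
    gronwallEval β p t (C r * X ^ k) = r * gronwallBasis β p k t := by
  rw [C_mul_X_pow_eq_monomial, gronwallEval_monomial]

theorem gronwallEval_C (t : ℝ) (r : ℝ≥0∞) : gronwallEval β p t (C r) = r := by
  simpa [gronwallBasis] using gronwallEval_monomial (β := β) (p := p) t 0 r

theorem measurable_gronwallEval (Q : ℝ≥0∞[X]) :
    Measurable fun t => gronwallEval β p t Q := by
  simp_rw [gronwallEval_apply]
  exact Finset.measurable_sum _ fun k _ => (measurable_gronwallBasis k).const_mul _

theorem tailLpNorm_gronwallEval_le (hp : 1 ≤ p) {t : ℝ} (ht : t ≤ β) (Q : ℝ≥0∞[X]) :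
    tailLpNorm β p (fun s => gronwallEval β p s Q) t ≤ gronwallEval β p t (X * Q) := by
  induction Q using Polynomial.induction_on' with
  | add Q R hQ hR =>
    simp only [map_add, mul_add]
    exact (tailLpNorm_add_le hp (measurable_gronwallEval Q) (measurable_gronwallEval R) t).trans
      (add_le_add hQ hR)
  | monomial k r =>
    simp only [gronwallEval_monomial, X_mul_monomial]
    rw [tailLpNorm_const_mul (by linarith) (measurable_gronwallBasis k),
      tailLpNorm_gronwallBasis (by linarith) k ht]

end gronwallEval

noncomputable def gronwallPoly {R : Type*} [CommSemiring R] (a b c m : R) : ℕ → R[X]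
  | 0 => C m
  | n + 1 => (C (a * c) + C (b * m) * X) * (C c + C b * X) ^ n

namespace gronwallPoly

variable {R : Type*} [CommSemiring R] (a b c m : R)

theorem succ_eq_C_add_X_mul_sum (n : ℕ) :
    C (a * c ^ (n + 1)) +
        X * ∑ ℓ ∈ Finset.range (n + 1), C (b * c ^ (n - ℓ)) * gronwallPoly a b c m ℓ =
      gronwallPoly a b c m (n + 1) := by
  induction n with
  | zero => simp [gronwallPoly]; ring
  | succ n ih =>
    have hshift :
        ∑ ℓ ∈ Finset.range (n + 1), C (b * c ^ (n + 1 - ℓ)) * gronwallPoly a b c m ℓ =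
          C c * ∑ ℓ ∈ Finset.range (n + 1), C (b * c ^ (n - ℓ)) * gronwallPoly a b c m ℓ := by
      rw [Finset.mul_sum]
      refine Finset.sum_congr rfl fun ℓ hℓ => ?_
      rw [Nat.sub_add_comm (Finset.mem_range_succ_iff.1 hℓ), pow_succ]
      simp only [map_mul]
      ring
    calc _ = C c * (C (a * c ^ (n + 1)) + X * ∑ ℓ ∈ Finset.range (n + 1),
              C (b * c ^ (n - ℓ)) * gronwallPoly a b c m ℓ) +
            C b * X * gronwallPoly a b c m (n + 1) := by
          rw [Finset.sum_range_succ, hshift, Nat.sub_self, pow_zero, mul_one]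
          simp only [map_mul, map_pow]
          ring
      _ = gronwallPoly a b c m (n + 2) := by
          rw [ih]
          simp only [gronwallPoly, pow_succ]
          ring

theorem succ_eq_sum_range (n : ℕ) :
    gronwallPoly a b c m (n + 1) = ∑ j ∈ Finset.range (n + 1), C ((n.choose j : R) * b ^ j) *
      (C (a * c ^ (n + 1 - j)) * X ^ j + C (b * m * c ^ (n - j)) * X ^ (j + 1)) := by
  rw [gronwallPoly, add_comm (C c), add_pow, Finset.mul_sum]
  refine Finset.sum_congr rfl fun j hj => ?_
  rw [Nat.succ_sub (Finset.mem_range_succ_iff.1 hj)]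
  simp only [map_mul, map_pow, map_natCast, pow_succ]
  ring

end gronwallPoly

theorem le_gronwallEval_gronwallPoly {α β p : ℝ} (hp : 1 ≤ p) {a b c m : ℝ≥0∞} {N : ℕ}
    {f : ℕ → ℝ → ℝ≥0∞} (hf₀ : ∀ t ∈ Set.Icc α β, f 0 t ≤ m)
    (hrec : ∀ n, 1 ≤ n → n ≤ N → ∀ t ∈ Set.Icc α β,
      f n t ≤ a * c ^ n + ∑ ℓ ∈ Finset.range n, b * c ^ (n - ℓ - 1) * tailLpNorm β p (f ℓ) t)
    {n : ℕ} (hn : n ≤ N) {t : ℝ} (ht : t ∈ Set.Icc α β) :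
    f n t ≤ gronwallEval β p t (gronwallPoly a b c m n) := by
  induction n using Nat.strong_induction_on generalizing t with
  | _ n ih =>
  cases n with
  | zero => simpa [gronwallPoly, gronwallEval_C] using hf₀ t ht
  | succ n =>
    have hI : ∀ ℓ ≤ n,
        tailLpNorm β p (f ℓ) t ≤ gronwallEval β p t (X * gronwallPoly a b c m ℓ) :=
      fun ℓ hℓ => calc
        tailLpNorm β p (f ℓ) t
            ≤ tailLpNorm β p (fun s => gronwallEval β p s (gronwallPoly a b c m ℓ)) t :=
          tailLpNorm_mono (by linarith) (measurable_gronwallEval _) fun s hs =>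
            ih ℓ (by omega) (by omega) ⟨ht.1.trans hs.1, hs.2⟩
        _ ≤ _ := tailLpNorm_gronwallEval_le hp ht.2 _
    calc f (n + 1) t
        ≤ a * c ^ (n + 1) +
            ∑ ℓ ∈ Finset.range (n + 1), b * c ^ (n - ℓ) * tailLpNorm β p (f ℓ) t := by
          simpa only [Nat.sub_sub, Nat.add_sub_add_right] using hrec (n + 1) (by omega) hn t ht
      _ ≤ a * c ^ (n + 1) + ∑ ℓ ∈ Finset.range (n + 1),
            b * c ^ (n - ℓ) * gronwallEval β p t (X * gronwallPoly a b c m ℓ) := by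
          gcongr with ℓ hℓ
          exact hI ℓ (Finset.mem_range_succ_iff.1 hℓ)
      _ = gronwallEval β p t (gronwallPoly a b c m (n + 1)) := by
          rw [← gronwallPoly.succ_eq_C_add_X_mul_sum, map_add, gronwallEval_C, Finset.mul_sum,
            map_sum]
          simp only [← smul_eq_C_mul, mul_smul_comm, map_smul, smul_eq_mul]

theorem gronwallEval_gronwallPoly_le {β p t : ℝ} (a b c m T K : ℝ≥0∞) (n : ℕ)
    (hK : ∀ k ≤ n + 1, c ^ (n + 1 - k) * gronwallBasis β p k t ≤ K * T ^ k) :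
    gronwallEval β p t (gronwallPoly a b c m (n + 1)) ≤
      K * ((a + b * m * T) * (1 + b * T) ^ n) := by
  rw [gronwallPoly.succ_eq_sum_range, map_sum, add_comm 1, add_pow, Finset.mul_sum,
    Finset.mul_sum]
  gcongr with j hj
  have hj : j ≤ n := Finset.mem_range_succ_iff.1 hj
  rw [← smul_eq_C_mul, map_smul, map_add, gronwallEval_C_mul_X_pow, gronwallEval_C_mul_X_pow,
    smul_eq_mul]
  have h₁ := hK j (by omega)
  have h₂ := hK (j + 1) (by omega)
  rw [Nat.add_sub_add_right] at h₂
  calc (n.choose j : ℝ≥0∞) * b ^ j * (a * c ^ (n + 1 - j) * gronwallBasis β p j t +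
          b * m * c ^ (n - j) * gronwallBasis β p (j + 1) t)
      ≤ (n.choose j : ℝ≥0∞) * b ^ j * (a * (K * T ^ j) + b * m * (K * T ^ (j + 1))) := by
        simp only [mul_assoc]
        gcongr
    _ = K * ((a + b * m * T) * ((b * T) ^ j * 1 ^ (n - j) * n.choose j)) := by ring

theorem ofReal_pow_mul_gronwallBasis {c β p t : ℝ} (hc : 0 ≤ c) (hp : 0 ≤ p) (ht : t ≤ β)
    (j k : ℕ) :
    ENNReal.ofReal c ^ j * gronwallBasis β p k t =
      ENNReal.ofReal (c ^ j / (k.factorial : ℝ) ^ (1 / p)) *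
        ENNReal.ofReal ((β - t) ^ (1 / p)) ^ k := by
  have hβt : 0 ≤ β - t := sub_nonneg.2 ht
  rw [gronwallBasis, ENNReal.ofReal_rpow_of_nonneg (by positivity) (by positivity),
    Real.div_rpow (by positivity) (by positivity), ← Real.rpow_pow_comm hβt,
    ← ENNReal.ofReal_pow hc, ← ENNReal.ofReal_pow (by positivity),
    ← ENNReal.ofReal_mul (by positivity), ← ENNReal.ofReal_mul (by positivity)]
  ring_nf

theorem stmt_16_general
    (N : ℕ) (hN : 1 ≤ N)
    (a b c : ℝ) (ha : 0 ≤ a) (hb : 0 ≤ b) (hc : 0 ≤ c)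
    (α β : ℝ) (hαβ : α ≤ β)
    (p : ℝ) (hp : 1 ≤ p)
    (f : ℕ → ℝ → ℝ≥0∞)
    (hrec : ∀ n, 1 ≤ n → n ≤ N → ∀ t ∈ Set.Icc α β,
      f n t ≤ ENNReal.ofReal (a * c ^ n)
        + ∑ ℓ ∈ Finset.range n,
            ENNReal.ofReal (b * c ^ (n - ℓ - 1))
              * (∫⁻ s in Set.Icc t β, (f ℓ s) ^ p) ^ (1 / p)) :
    f N α ≤
      (ENNReal.ofReal a
          + ENNReal.ofReal (b * (β - α) ^ (1 / p)) * (⨆ s : Set.Icc α β, f 0 s.1))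
        * (⨆ k ∈ Finset.range (N + 1),
            ENNReal.ofReal (c ^ (N - k) / ((k.factorial : ℝ) ^ (1 / p))))
        * ENNReal.ofReal ((1 + b * (β - α) ^ (1 / p)) ^ (N - 1)) := by
  obtain ⟨n, rfl⟩ : ∃ n, N = n + 1 := ⟨N - 1, by omega⟩
  set m := ⨆ s : Set.Icc α β, f 0 s.1
  set T := ENNReal.ofReal ((β - α) ^ (1 / p))
  set K := ⨆ k ∈ Finset.range (n + 1 + 1),
    ENNReal.ofReal (c ^ (n + 1 - k) / ((k.factorial : ℝ) ^ (1 / p)))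
  have hf₀ (t : ℝ) (ht : t ∈ Set.Icc α β) : f 0 t ≤ m :=
    le_iSup (fun s : Set.Icc α β => f 0 s.1) ⟨t, ht⟩
  have hbound := le_gronwallEval_gronwallPoly hp hf₀ (fun n h₁ h₂ t ht => by
      simpa only [tailLpNorm, ENNReal.ofReal_mul, ha, hb, ENNReal.ofReal_pow hc] using
        hrec n h₁ h₂ t ht) le_rfl ⟨le_rfl, hαβ⟩
  refine hbound.trans ((gronwallEval_gronwallPoly_le _ _ _ m T K n fun k hk => ?_).trans_eq ?_)
  · rw [ofReal_pow_mul_gronwallBasis hc (by linarith) hαβ]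
    gcongr
    exact le_iSup₂_of_le k (Finset.mem_range_succ_iff.2 hk) le_rfl
  · rw [ENNReal.ofReal_mul hb, ENNReal.ofReal_pow (by positivity),
      ENNReal.ofReal_add zero_le_one (by positivity), ENNReal.ofReal_mul hb, ENNReal.ofReal_one,
      Nat.add_sub_cancel]
    ring

/-- Gronwall-type inequality, Lemma `g090a`.
Let `N ∈ ℕ`, `a, b, c ∈ [0,∞)`, `α ∈ ℝ`, `β ∈ [α,∞)`, `p ∈ [1,∞)`, let
`f_n : [α,β] → [0,∞]`, `n ∈ ℕ₀`, be measurable, assume `sup_{s∈[α,β]} f₀(s) < ∞`,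
and assume for all `n ∈ {1,…,N}`, `t ∈ [α,β]` that
`f_n(t) ≤ a cⁿ + Σ_{ℓ=0}^{n-1} b c^{n-ℓ-1} (∫_t^β (f_ℓ(s))^p ds)^{1/p}`.  Then
`f_N(α) ≤ [a + b (β-α)^{1/p} sup_{s∈[α,β]} f₀(s)]
          · [max_{0≤k≤N} c^{N-k}/(k!)^{1/p}] · [1 + b (β-α)^{1/p}]^{N-1}`. -/
theorem stmt_16
    (N : ℕ) (hN : 1 ≤ N)
    (a b c : ℝ) (ha : 0 ≤ a) (hb : 0 ≤ b) (hc : 0 ≤ c)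
    (α β : ℝ) (hαβ : α ≤ β)
    (p : ℝ) (hp : 1 ≤ p)
    (f : ℕ → ℝ → ℝ≥0∞)
    (hfmeas : ∀ n, Measurable fun s : Set.Icc α β => f n s.1)
    (hf0 : (⨆ s : Set.Icc α β, f 0 s.1) < ⊤)
    (hrec : ∀ n, 1 ≤ n → n ≤ N → ∀ t ∈ Set.Icc α β,
      f n t ≤ ENNReal.ofReal (a * c ^ n)
        + ∑ ℓ ∈ Finset.range n,
            ENNReal.ofReal (b * c ^ (n - ℓ - 1))
              * (∫⁻ s in Set.Icc t β, (f ℓ s) ^ p) ^ (1 / p)) :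
    f N α ≤
      (ENNReal.ofReal a
          + ENNReal.ofReal (b * (β - α) ^ (1 / p)) * (⨆ s : Set.Icc α β, f 0 s.1))
        * (⨆ k ∈ Finset.range (N + 1),
            ENNReal.ofReal (c ^ (N - k) / ((k.factorial : ℝ) ^ (1 / p))))
        * ENNReal.ofReal ((1 + b * (β - α) ^ (1 / p)) ^ (N - 1)) :=
  stmt_16_general N hN a b c ha hb hc α β hαβ p hp f hrec
end

section
/- Let M, N ∈ ℕ, T ∈ (0,∞), τ ∈ [0,T], a, b ∈ [0,∞), p ∈ [1,∞), let f_n : [τ,T] → [0,∞], n ∈ ℕ₀, be measurable, assume sup_{s ∈ [τ,T]} f₀(s) < ∞, and assume for all n ∈ {1,2,…,N} and t ∈ [τ,T] that f_n(t) ≤ a/M^{n/2} + Σ_{ℓ=0}^{n−1} (b/M^{(n−ℓ−1)/2}) (∫_t^T (f_ℓ(s))^p ds)^{1/p}. Then f_N(τ) ≤ [ a + b(T−τ)^{1/p} · sup_{s ∈ [τ,T]} f₀(s) ] · exp(M^{p/2}/p) · M^{−N/2} · [ 1 + b(T−τ)^{1/p} ]^{N−1}. -/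
open MeasureTheory ENNReal

/-!
Write `q = M^{-1/2}`, `δ = T - τ`, `β = b δ^{1/p}` and `α = M^{p/2}/(p δ)`. By strong induction
on `n`, `f_n(t) ≤ q^n D_n e^{α(T-t)}`, where `D_n = gronwallCoeff a β (sup f₀) n`. The
exponential weight absorbs the integrals:
`(∫_t^T (K e^{α(T-s)})^p ds)^{1/p} ≤ K e^{α(T-t)} (pα)^{-1/p} = K e^{α(T-t)} q δ^{1/p}`,
so the recursion reduces to `D_n = a + β (D_0 + ⋯ + D_{n-1})`, which the geometric sum solves.
At `t = τ` the weight is `e^{αδ} = e^{M^{p/2}/p}`.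
-/

lemma integral_exp_const_mul_sub {c : ℝ} (hc : c ≠ 0) (t T : ℝ) :
    ∫ s in t..T, Real.exp (c * (T - s)) = (Real.exp (c * (T - t)) - 1) / c := by
  have h := intervalIntegral.integral_comp_sub_mul Real.exp (a := t) (b := T) hc (c * T)
  simp only [← mul_sub, sub_self, integral_exp, Real.exp_zero, smul_eq_mul] at h
  rw [h, inv_mul_eq_div]

lemma rpow_one_div_setLIntegral_rpow_le_of_le_exp {p c K t T : ℝ} (hp : 0 < p) (hc : 0 < c)
    (hK : 0 ≤ K) (htT : t ≤ T) {g : ℝ → ℝ≥0∞}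
    (hg : ∀ s ∈ Set.Icc t T, g s ≤ ENNReal.ofReal (K * Real.exp (c * (T - s)))) :
    (∫⁻ s in Set.Icc t T, g s ^ p) ^ (1 / p)
      ≤ ENNReal.ofReal (K * Real.exp (c * (T - t)) * (p * c) ^ (-1 / p)) := by
  have hpc : 0 < p * c := mul_pos hp hc
  have hgp : ∀ s ∈ Set.Icc t T,
      g s ^ p ≤ ENNReal.ofReal (K ^ p * Real.exp (p * c * (T - s))) := fun s hs =>
    calc g s ^ p ≤ ENNReal.ofReal (K * Real.exp (c * (T - s))) ^ p := by gcongr; exact hg s hs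
      _ = ENNReal.ofReal (K ^ p * Real.exp (p * c * (T - s))) := by
        rw [ENNReal.ofReal_rpow_of_nonneg (by positivity) hp.le, Real.mul_rpow hK (by positivity),
          ← Real.exp_mul]
        ring_nf
  have hint : ∫⁻ s in Set.Icc t T, ENNReal.ofReal (K ^ p * Real.exp (p * c * (T - s)))
      ≤ ENNReal.ofReal (K ^ p * Real.exp (p * c * (T - t)) / (p * c)) := by
    rw [← ofReal_integral_eq_lintegral_ofReal (by fun_prop : Continuous _).integrableOn_Icc
      (ae_of_all _ fun s => by positivity), integral_Icc_eq_integral_Ioc,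
      ← intervalIntegral.integral_of_le htT, intervalIntegral.integral_const_mul,
      integral_exp_const_mul_sub hpc.ne', mul_div_assoc]
    gcongr
    linarith
  calc (∫⁻ s in Set.Icc t T, g s ^ p) ^ (1 / p)
      ≤ ENNReal.ofReal (K ^ p * Real.exp (p * c * (T - t)) / (p * c)) ^ (1 / p) := by
        gcongr
        exact (setLIntegral_mono' measurableSet_Icc hgp).trans hint
    _ = ENNReal.ofReal (K * Real.exp (c * (T - t)) * (p * c) ^ (-1 / p)) := by
        rw [ENNReal.ofReal_rpow_of_nonneg (by positivity) (by positivity),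
          Real.div_rpow (by positivity) hpc.le, Real.mul_rpow (by positivity) (by positivity),
          ← Real.rpow_mul hK, mul_one_div_cancel hp.ne', Real.rpow_one, ← Real.exp_mul,
          div_eq_mul_inv, ← Real.rpow_neg hpc.le, neg_div]
        congr 4
        field_simp

def gronwallCoeff (a β S : ℝ) : ℕ → ℝ
  | 0 => S
  | n + 1 => (a + β * S) * (1 + β) ^ n

lemma gronwallCoeff_nonneg {a β S : ℝ} (ha : 0 ≤ a) (hβ : 0 ≤ β) (hS : 0 ≤ S) :
    ∀ n, 0 ≤ gronwallCoeff a β S n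
  | 0 => hS
  | _ + 1 => by unfold gronwallCoeff; positivity

lemma add_mul_sum_range_gronwallCoeff (a β S : ℝ) (n : ℕ) :
    a + β * ∑ ℓ ∈ Finset.range (n + 1), gronwallCoeff a β S ℓ = gronwallCoeff a β S (n + 1) := by
  have hgeom := geom_sum_mul (1 + β) n
  simp only [Finset.sum_range_succ', gronwallCoeff, ← Finset.mul_sum]
  linear_combination (a + β * S) * hgeom

lemma add_sum_range_le_pow_mul_gronwallCoeff {a b q r S E : ℝ} (ha : 0 ≤ a) (hq : 0 ≤ q)
    (hE : 1 ≤ E) (m : ℕ) :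
    a * q ^ (m + 1) + ∑ ℓ ∈ Finset.range (m + 1),
        b * q ^ (m + 1 - ℓ - 1) * (q ^ ℓ * gronwallCoeff a (b * r) S ℓ * E * (q * r))
      ≤ q ^ (m + 1) * gronwallCoeff a (b * r) S (m + 1) * E := by
  have hterm : ∀ ℓ ∈ Finset.range (m + 1),
      b * q ^ (m + 1 - ℓ - 1) * (q ^ ℓ * gronwallCoeff a (b * r) S ℓ * E * (q * r))
        = (b * r) * q ^ (m + 1) * E * gronwallCoeff a (b * r) S ℓ := fun ℓ hℓ => by
    have hpow : q ^ (m + 1 - ℓ - 1) * q ^ ℓ * q = q ^ (m + 1) := by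
      rw [← pow_add, ← pow_succ]
      have := Finset.mem_range.1 hℓ
      congr 1
      omega
    linear_combination (b * r * E * gronwallCoeff a (b * r) S ℓ) * hpow
  rw [Finset.sum_congr rfl hterm, ← Finset.mul_sum, ← add_mul_sum_range_gronwallCoeff]
  nlinarith [mul_nonneg (mul_nonneg ha (pow_nonneg hq (m + 1))) (sub_nonneg.2 hE)]

lemma mul_inv_rpow_neg_one_div {p q δ : ℝ} (hp : 0 < p) (hq : 0 < q) (hδ : 0 < δ) :
    (p * (p * q ^ p * δ)⁻¹) ^ (-1 / p) = q * δ ^ (1 / p) := by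
  rw [show p * (p * q ^ p * δ)⁻¹ = (q ^ p * δ)⁻¹ by field_simp, Real.inv_rpow (by positivity),
    ← Real.rpow_neg (by positivity), neg_div, neg_neg, Real.mul_rpow (by positivity) hδ.le,
    ← Real.rpow_mul hq.le, mul_one_div_cancel hp.ne', Real.rpow_one]

lemma ENNReal.ofReal_add_sum_ofReal_mul_ofReal {ι : Type*} (s : Finset ι) {x : ℝ} {y z : ι → ℝ}
    (hx : 0 ≤ x) (hy : ∀ i, 0 ≤ y i) (hz : ∀ i, 0 ≤ z i) :
    ENNReal.ofReal x + ∑ i ∈ s, ENNReal.ofReal (y i) * ENNReal.ofReal (z i)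
      = ENNReal.ofReal (x + ∑ i ∈ s, y i * z i) := by
  have hyz : ∀ i ∈ s, 0 ≤ y i * z i := fun i _ => mul_nonneg (hy i) (hz i)
  rw [ENNReal.ofReal_add hx (Finset.sum_nonneg hyz), ENNReal.ofReal_sum_of_nonneg hyz]
  exact congrArg _ (Finset.sum_congr rfl fun i _ => (ENNReal.ofReal_mul (hy i)).symm)

def GronwallRecursion (N : ℕ) (q a b p τ T : ℝ) (f : ℕ → ℝ → ℝ≥0∞) : Prop :=
  ∀ n, 1 ≤ n → n ≤ N → ∀ t ∈ Set.Icc τ T,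
    f n t ≤ ENNReal.ofReal (a * q ^ n) + ∑ ℓ ∈ Finset.range n,
      ENNReal.ofReal (b * q ^ (n - ℓ - 1)) * (∫⁻ s in Set.Icc t T, f ℓ s ^ p) ^ (1 / p)

namespace GronwallRecursion

variable {N : ℕ} {q a b p τ T : ℝ} {f : ℕ → ℝ → ℝ≥0∞}

theorem le_pow_mul_gronwallCoeff_mul_exp (hrec : GronwallRecursion N q a b p τ T f)
    (hq : 0 < q) (hτT : τ < T) (ha : 0 ≤ a) (hb : 0 ≤ b) (hp : 0 < p) {S : ℝ} (hS : 0 ≤ S)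
    (hf0 : ∀ s ∈ Set.Icc τ T, f 0 s ≤ ENNReal.ofReal S)
    {n : ℕ} (hn : n ≤ N) {t : ℝ} (ht : t ∈ Set.Icc τ T) :
    f n t ≤ ENNReal.ofReal (q ^ n * gronwallCoeff a (b * (T - τ) ^ (1 / p)) S n
      * Real.exp ((p * q ^ p * (T - τ))⁻¹ * (T - t))) := by
  set r := (T - τ) ^ (1 / p)
  set c := (p * q ^ p * (T - τ))⁻¹
  have hc : 0 < c := by have := sub_pos.2 hτT; positivity
  have hD := gronwallCoeff_nonneg ha (mul_nonneg hb (by positivity : 0 ≤ r)) hS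
  have hE : ∀ s ∈ Set.Icc τ T, 1 ≤ Real.exp (c * (T - s)) := fun s hs =>
    Real.one_le_exp (mul_nonneg hc.le (sub_nonneg.2 hs.2))
  -- `c` is chosen so that the integral bound produces exactly the factor `q * r`.
  have hpc : (p * c) ^ (-1 / p) = q * r := mul_inv_rpow_neg_one_div hp hq (sub_pos.2 hτT)
  induction n using Nat.strong_induction_on generalizing t with
  | _ n ih =>
  cases n with
  | zero =>
    simpa [gronwallCoeff] using
      (hf0 t ht).trans (ENNReal.ofReal_le_ofReal (le_mul_of_one_le_right hS (hE t ht)))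
  | succ m =>
    set B : ℕ → ℝ := fun ℓ =>
      q ^ ℓ * gronwallCoeff a (b * r) S ℓ * Real.exp (c * (T - t)) * (q * r)
    have hint : ∀ ℓ < m + 1,
        (∫⁻ s in Set.Icc t T, f ℓ s ^ p) ^ (1 / p) ≤ ENNReal.ofReal (B ℓ) := by
      intro ℓ hℓ
      refine (rpow_one_div_setLIntegral_rpow_le_of_le_exp
        (K := q ^ ℓ * gronwallCoeff a (b * r) S ℓ) hp hc (mul_nonneg (by positivity) (hD ℓ)) ht.2
        fun s hs => ?_).trans_eq (by rw [hpc])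
      exact ih ℓ hℓ (by omega) ⟨ht.1.trans hs.1, hs.2⟩
    calc f (m + 1) t
        ≤ ENNReal.ofReal (a * q ^ (m + 1)) + ∑ ℓ ∈ Finset.range (m + 1),
            ENNReal.ofReal (b * q ^ (m + 1 - ℓ - 1))
              * (∫⁻ s in Set.Icc t T, f ℓ s ^ p) ^ (1 / p) :=
          hrec (m + 1) (by omega) hn t ht
      _ ≤ ENNReal.ofReal (a * q ^ (m + 1)) + ∑ ℓ ∈ Finset.range (m + 1),
            ENNReal.ofReal (b * q ^ (m + 1 - ℓ - 1)) * ENNReal.ofReal (B ℓ) := by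
          gcongr with ℓ hℓ
          exact hint ℓ (Finset.mem_range.1 hℓ)
      _ = ENNReal.ofReal (a * q ^ (m + 1) + ∑ ℓ ∈ Finset.range (m + 1),
            b * q ^ (m + 1 - ℓ - 1) * B ℓ) :=
          ENNReal.ofReal_add_sum_ofReal_mul_ofReal _ (by positivity) (fun _ => by positivity)
            fun ℓ => by have := hD ℓ; positivity
      _ ≤ _ := ENNReal.ofReal_le_ofReal
          (add_sum_range_le_pow_mul_gronwallCoeff ha hq.le (hE t ht) m)

theorem le_ofReal_mul_pow_self (hrec : GronwallRecursion N q a b p T T f) (hp : 0 < p)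
    (hN : 1 ≤ N) : f N T ≤ ENNReal.ofReal (a * q ^ N) := by
  have hzero : ∀ ℓ, ∫⁻ s in Set.Icc T T, f ℓ s ^ p = 0 := fun ℓ =>
    setLIntegral_measure_zero _ _ (by simp)
  simpa only [hzero, ENNReal.zero_rpow_of_pos (one_div_pos.2 hp), mul_zero,
    Finset.sum_const_zero, add_zero] using hrec N hN le_rfl T ⟨le_rfl, le_rfl⟩

theorem le_mul_exp_mul_pow (hrec : GronwallRecursion N q a b p τ T f) (hN : 1 ≤ N)
    (hq : 0 < q) (hτT : τ ≤ T) (ha : 0 ≤ a) (hb : 0 ≤ b) (hp : 0 < p)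
    (hf0 : ⨆ s : Set.Icc τ T, f 0 s.1 < ⊤) :
    f N τ ≤ (ENNReal.ofReal a
          + ENNReal.ofReal (b * (T - τ) ^ (1 / p)) * (⨆ s : Set.Icc τ T, f 0 s.1))
        * ENNReal.ofReal (Real.exp (p * q ^ p)⁻¹)
        * ENNReal.ofReal (q ^ N) * ENNReal.ofReal ((1 + b * (T - τ) ^ (1 / p)) ^ (N - 1)) := by
  obtain ⟨S, hS₀, hS⟩ : ∃ S : ℝ, 0 ≤ S ∧ ⨆ s : Set.Icc τ T, f 0 s.1 = ENNReal.ofReal S :=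
    ⟨_, ENNReal.toReal_nonneg, (ENNReal.ofReal_toReal hf0.ne).symm⟩
  have hβ : 0 ≤ b * (T - τ) ^ (1 / p) := mul_nonneg hb (Real.rpow_nonneg (sub_nonneg.2 hτT) _)
  rw [hS, ← ENNReal.ofReal_mul hβ, ← ENNReal.ofReal_add ha (by positivity),
    ← ENNReal.ofReal_mul (by positivity), ← ENNReal.ofReal_mul (by positivity),
    ← ENNReal.ofReal_mul (by positivity)]
  obtain ⟨k, rfl⟩ : ∃ k, N = k + 1 := ⟨N - 1, by omega⟩
  rcases hτT.eq_or_lt with rfl | hτT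
  · refine (hrec.le_ofReal_mul_pow_self hp hN).trans (ENNReal.ofReal_le_ofReal ?_)
    simp only [sub_self, Real.zero_rpow (one_div_pos.2 hp).ne', mul_zero, zero_mul, add_zero,
      one_pow, mul_one]
    exact mul_le_mul_of_nonneg_right (le_mul_of_one_le_right ha (Real.one_le_exp (by positivity)))
      (by positivity)
  · have hf0' : ∀ s ∈ Set.Icc τ T, f 0 s ≤ ENNReal.ofReal S := fun s hs =>
      hS ▸ le_iSup (fun s : Set.Icc τ T => f 0 s.1) ⟨s, hs⟩
    refine (hrec.le_pow_mul_gronwallCoeff_mul_exp hq hτT ha hb hp hS₀ hf0' le_rfl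
      ⟨le_rfl, hτT.le⟩).trans_eq ?_
    rw [mul_inv, inv_mul_cancel_right₀ (sub_pos.2 hτT).ne', gronwallCoeff, Nat.add_sub_cancel]
    congr 1
    ring

end GronwallRecursion

theorem stmt_17_general
    (M N : ℕ) (hM : 1 ≤ M) (hN : 1 ≤ N)
    (T : ℝ) (τ : ℝ) (hτ : τ ∈ Set.Icc 0 T)
    (a b : ℝ) (ha : 0 ≤ a) (hb : 0 ≤ b)
    (p : ℝ) (hp : 1 ≤ p)
    (f : ℕ → ℝ → ℝ≥0∞)
    (hf0 : (⨆ s : Set.Icc τ T, f 0 s.1) < ⊤)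
    (hrec : ∀ n, 1 ≤ n → n ≤ N → ∀ t ∈ Set.Icc τ T,
      f n t ≤ ENNReal.ofReal (a / (M : ℝ) ^ ((n : ℝ) / 2))
        + ∑ ℓ ∈ Finset.range n,
            ENNReal.ofReal (b / (M : ℝ) ^ (((n - ℓ - 1 : ℕ) : ℝ) / 2))
              * (∫⁻ s in Set.Icc t T, (f ℓ s) ^ p) ^ (1 / p)) :
    f N τ ≤
      (ENNReal.ofReal a
          + ENNReal.ofReal (b * (T - τ) ^ (1 / p)) * (⨆ s : Set.Icc τ T, f 0 s.1))
        * ENNReal.ofReal (Real.exp ((M : ℝ) ^ (p / 2) / p))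
        * ENNReal.ofReal ((M : ℝ) ^ (-(N : ℝ) / 2))
        * ENNReal.ofReal ((1 + b * (T - τ) ^ (1 / p)) ^ (N - 1)) := by
  have hM₀ : (0 : ℝ) < M := by exact_mod_cast hM
  set q := (M : ℝ) ^ (-(1 : ℝ) / 2) with hq_def
  have hpow : ∀ k : ℕ, (M : ℝ) ^ (-(k : ℝ) / 2) = q ^ k := fun k => by
    rw [hq_def, ← Real.rpow_mul_natCast hM₀.le]
    ring_nf
  have hdiv : ∀ (x : ℝ) (k : ℕ), x / (M : ℝ) ^ ((k : ℝ) / 2) = x * q ^ k := fun x k => by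
    rw [div_eq_mul_inv, ← Real.rpow_neg hM₀.le, ← neg_div, hpow]
  have hexp : (M : ℝ) ^ (p / 2) / p = (p * q ^ p)⁻¹ := by
    rw [hq_def, ← Real.rpow_mul hM₀.le, show -(1 : ℝ) / 2 * p = -(p / 2) by ring,
      Real.rpow_neg hM₀.le, mul_inv, inv_inv, div_eq_inv_mul]
  simp only [hdiv] at hrec
  rw [hpow, hexp]
  exact GronwallRecursion.le_mul_exp_mul_pow hrec hN (by positivity) hτ.2 ha hb (by linarith) hf0

/-- Gronwall-type inequality, Lemma `g09`.
Let `M, N ∈ ℕ`, `T ∈ (0,∞)`, `τ ∈ [0,T]`, `a, b ∈ [0,∞)`, `p ∈ [1,∞)`, let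
`f_n : [τ,T] → [0,∞]`, `n ∈ ℕ₀`, be measurable, assume `sup_{s∈[τ,T]} f₀(s) < ∞`,
and assume for all `n ∈ {1,…,N}`, `t ∈ [τ,T]` that
`f_n(t) ≤ a/M^{n/2} + Σ_{ℓ=0}^{n-1} (b/M^{(n-ℓ-1)/2}) (∫_t^T (f_ℓ(s))^p ds)^{1/p}`.
Then `f_N(τ) ≤ [a + b (T-τ)^{1/p} sup_{s∈[τ,T]} f₀(s)] · exp(M^{p/2}/p) · M^{-N/2}
               · [1 + b (T-τ)^{1/p}]^{N-1}`. -/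
theorem stmt_17
    (M N : ℕ) (hM : 1 ≤ M) (hN : 1 ≤ N)
    (T : ℝ) (hT : 0 < T) (τ : ℝ) (hτ : τ ∈ Set.Icc 0 T)
    (a b : ℝ) (ha : 0 ≤ a) (hb : 0 ≤ b)
    (p : ℝ) (hp : 1 ≤ p)
    (f : ℕ → ℝ → ℝ≥0∞)
    (hfmeas : ∀ n, Measurable fun s : Set.Icc τ T => f n s.1)
    (hf0 : (⨆ s : Set.Icc τ T, f 0 s.1) < ⊤)
    (hrec : ∀ n, 1 ≤ n → n ≤ N → ∀ t ∈ Set.Icc τ T,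
      f n t ≤ ENNReal.ofReal (a / (M : ℝ) ^ ((n : ℝ) / 2))
        + ∑ ℓ ∈ Finset.range n,
            ENNReal.ofReal (b / (M : ℝ) ^ (((n - ℓ - 1 : ℕ) : ℝ) / 2))
              * (∫⁻ s in Set.Icc t T, (f ℓ s) ^ p) ^ (1 / p)) :
    f N τ ≤
      (ENNReal.ofReal a
          + ENNReal.ofReal (b * (T - τ) ^ (1 / p)) * (⨆ s : Set.Icc τ T, f 0 s.1))
        * ENNReal.ofReal (Real.exp ((M : ℝ) ^ (p / 2) / p))
        * ENNReal.ofReal ((M : ℝ) ^ (-(N : ℝ) / 2))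
        * ENNReal.ofReal ((1 + b * (T - τ) ^ (1 / p)) ^ (N - 1)) :=
  stmt_17_general M N hM hN T τ hτ a b ha hb p hp f hf0 hrec
end
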